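/- Let (C, D) be an entwined strict monoidal category. Define A_{X,Y,Z} := D_{X⊗Y,Z}(id_X⊗D_{Y,Z}⁻¹) and B_{X,Y,Z} := (id_X⊗D_{Y,Z}⁻¹)D_{X⊗Y,Z}. Then (C, A, B) is a pure-braided category. -/

import Mathlib

/-!
Fusion together with naturality gives `A` and `B` a second expression each:
`A_{X,Y,Z} = (D_{X,Y}⁻¹ ⊗ id) D_{X,Y⊗Z}` and `B_{X,Y,Z} = D_{X,Y⊗Z} (D_{X,Y}⁻¹ ⊗ id)`.
With the defining expressions in the axioms whose first argument is a tensor product, and the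
second ones in the axioms whose last argument is, both sides of these four axioms telescope to
the same composite. Both `A_{U,V,W} ⊗ id` and `id ⊗ B_{V,W,X}` begin with
`id ⊗ D_{V,W}⁻¹ ⊗ id`, followed by `D_{U⊗V,W} ⊗ id` and `id ⊗ D_{V,W⊗X}` respectively, so their
commutation is exactly the entwining axiom. Finally, fusion at `(I, I, Z)` and `D_{I,I} = id`
force `D_{I,Z} = id`, whence `A_{U,I,V} = B_{U,I,V}`.
-/

open CategoryTheory MonoidalCategory

universe v u

/-- A monoidal category is strict when the associators and unitors are `eqToHom`s of
equalities of objects. -/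
structure MonStrict (C : Type u) [Category.{v} C] [MonoidalCategory C] : Prop where
  assocObj : ∀ X Y Z : C, (X ⊗ Y) ⊗ Z = X ⊗ (Y ⊗ Z)
  lidObj : ∀ X : C, 𝟙_ C ⊗ X = X
  ridObj : ∀ X : C, X ⊗ 𝟙_ C = X
  assocHom : ∀ X Y Z : C, (α_ X Y Z).hom = eqToHom (assocObj X Y Z)
  lidHom : ∀ X : C, (λ_ X).hom = eqToHom (lidObj X)
  ridHom : ∀ X : C, (ρ_ X).hom = eqToHom (ridObj X)

variable {C : Type u} [Category.{v} C] [MonoidalCategory C]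

/-- Transport of an endomorphism along an equality of objects of a strict monoidal
category. -/
def cE {X Y : C} (h : X = Y) (f : Y ⟶ Y) : X ⟶ X := eqToHom h ≫ f ≫ eqToHom h.symm

/-- A pure-braided structure on a strict monoidal category: two families of natural
isomorphisms `A, B : U ⊗ V ⊗ W ≅ U ⊗ V ⊗ W` satisfying the pure-braided axioms. -/
structure PureBraided (C : Type u) [Category.{v} C] [MonoidalCategory C]
    (hS : MonStrict C) where
  A : ∀ U V W : C, U ⊗ (V ⊗ W) ≅ U ⊗ (V ⊗ W)
  B : ∀ U V W : C, U ⊗ (V ⊗ W) ≅ U ⊗ (V ⊗ W)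
  natA : ∀ {U V W U' V' W' : C} (f : U ⟶ U') (g : V ⟶ V') (h : W ⟶ W'),
    (f ⊗ₘ (g ⊗ₘ h)) ≫ (A U' V' W').hom = (A U V W).hom ≫ (f ⊗ₘ (g ⊗ₘ h))
  natB : ∀ {U V W U' V' W' : C} (f : U ⟶ U') (g : V ⟶ V') (h : W ⟶ W'),
    (f ⊗ₘ (g ⊗ₘ h)) ≫ (B U' V' W').hom = (B U V W).hom ≫ (f ⊗ₘ (g ⊗ₘ h))
  /-- `A_{U⊗V,W,X} = A_{U,V⊗W,X}(id_U ⊗ A_{V,W,X})` -/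
  a1 : ∀ U V W X : C, (A (U ⊗ V) W X).hom =
    cE (by simp [hS.assocObj]) ((𝟙 U ⊗ₘ (A V W X).hom) ≫
      cE (by simp [hS.assocObj]) (A U (V ⊗ W) X).hom)
  /-- `A_{U,V,W⊗X} = (A_{U,V,W} ⊗ id_X) A_{U,V⊗W,X}` -/
  a2 : ∀ U V W X : C, (A U V (W ⊗ X)).hom =
    cE (by simp [hS.assocObj]) ((cE (by simp [hS.assocObj]) (A U (V ⊗ W) X).hom) ≫
      ((A U V W).hom ⊗ₘ 𝟙 X))
  /-- `B_{U⊗V,W,X} = (id_U ⊗ B_{V,W,X}) B_{U,V⊗W,X}` -/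
  baba : ∀ U V W X : C, (B (U ⊗ V) W X).hom =
    cE (by simp [hS.assocObj]) ((cE (by simp [hS.assocObj]) (B U (V ⊗ W) X).hom) ≫
      (𝟙 U ⊗ₘ (B V W X).hom))
  /-- `B_{U,V,W⊗X} = B_{U,V⊗W,X}(B_{U,V,W} ⊗ id_X)` -/
  b2 : ∀ U V W X : C, (B U V (W ⊗ X)).hom =
    cE (by simp [hS.assocObj]) (((B U V W).hom ⊗ₘ 𝟙 X) ≫
      cE (by simp [hS.assocObj]) (B U (V ⊗ W) X).hom)
  /-- `(A_{U,V,W} ⊗ id_X)(id_U ⊗ B_{V,W,X}) = (id_U ⊗ B_{V,W,X})(A_{U,V,W} ⊗ id_X)` -/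
  cab : ∀ U V W X : C,
    cE (by simp [hS.assocObj]) (𝟙 U ⊗ₘ (B V W X).hom) ≫ ((A U V W).hom ⊗ₘ 𝟙 X)
    = ((A U V W).hom ⊗ₘ 𝟙 X) ≫ cE (by simp [hS.assocObj]) (𝟙 U ⊗ₘ (B V W X).hom)
  /-- `A_{U,I,V} = B_{U,I,V}` -/
  t1t : ∀ U V : C, A U (𝟙_ C) V = B U (𝟙_ C) V

/-- A twine on a strict monoidal category. -/
structure Twine (C : Type u) [Category.{v} C] [MonoidalCategory C]
    (hS : MonStrict C) where
  D : ∀ X Y : C, X ⊗ Y ≅ X ⊗ Y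
  nat : ∀ {X Y X' Y' : C} (f : X ⟶ X') (g : Y ⟶ Y'),
    (f ⊗ₘ g) ≫ (D X' Y').hom = (D X Y).hom ≫ (f ⊗ₘ g)
  unit : (D (𝟙_ C) (𝟙_ C)).hom = 𝟙 (𝟙_ C ⊗ 𝟙_ C)
  /-- `(D_{X,Y} ⊗ id_Z) D_{X⊗Y,Z} = (id_X ⊗ D_{Y,Z}) D_{X,Y⊗Z}` -/
  fus : ∀ X Y Z : C, (D (X ⊗ Y) Z).hom ≫ ((D X Y).hom ⊗ₘ 𝟙 Z)
    = cE (by simp [hS.assocObj]) ((D X (Y ⊗ Z)).hom ≫ (𝟙 X ⊗ₘ (D Y Z).hom))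
  /-- the entwining axiom -/
  ent : ∀ X Y Z T : C,
    cE (by simp [hS.assocObj]) (𝟙 X ⊗ₘ (D Y (Z ⊗ T)).hom) ≫
      cE (by simp [hS.assocObj]) (𝟙 X ⊗ₘ ((D Y Z).inv ⊗ₘ 𝟙 T)) ≫
        ((D (X ⊗ Y) Z).hom ⊗ₘ 𝟙 T)
    = ((D (X ⊗ Y) Z).hom ⊗ₘ 𝟙 T) ≫
        cE (by simp [hS.assocObj]) (𝟙 X ⊗ₘ ((D Y Z).inv ⊗ₘ 𝟙 T)) ≫
          cE (by simp [hS.assocObj]) (𝟙 X ⊗ₘ (D Y (Z ⊗ T)).hom)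

/-- A strong twine on a strict monoidal category. -/
structure StrongTwine (C : Type u) [Category.{v} C] [MonoidalCategory C]
    (hS : MonStrict C) where
  D : ∀ X Y : C, X ⊗ Y ≅ X ⊗ Y
  nat : ∀ {X Y X' Y' : C} (f : X ⟶ X') (g : Y ⟶ Y'),
    (f ⊗ₘ g) ≫ (D X' Y').hom = (D X Y).hom ≫ (f ⊗ₘ g)
  unit : (D (𝟙_ C) (𝟙_ C)).hom = 𝟙 (𝟙_ C ⊗ 𝟙_ C)
  /-- `(T_{U,V} ⊗ id_W) T_{U⊗V,W} = (id_U ⊗ T_{V,W}) T_{U,V⊗W}` -/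
  fus : ∀ X Y Z : C, (D (X ⊗ Y) Z).hom ≫ ((D X Y).hom ⊗ₘ 𝟙 Z)
    = cE (by simp [hS.assocObj]) ((D X (Y ⊗ Z)).hom ≫ (𝟙 X ⊗ₘ (D Y Z).hom))
  /-- `(T_{U,V} ⊗ id_W)(id_U ⊗ T_{V,W}) = (id_U ⊗ T_{V,W})(T_{U,V} ⊗ id_W)` -/
  comm : ∀ X Y Z : C,
    cE (by simp [hS.assocObj]) (𝟙 X ⊗ₘ (D Y Z).hom) ≫ ((D X Y).hom ⊗ₘ 𝟙 Z)
    = ((D X Y).hom ⊗ₘ 𝟙 Z) ≫ cE (by simp [hS.assocObj]) (𝟙 X ⊗ₘ (D Y Z).hom)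

/-- A D-structure (consisting of isomorphisms) on a strict monoidal category. -/
structure DStructure (C : Type u) [Category.{v} C] [MonoidalCategory C]
    (hS : MonStrict C) where
  R : ∀ X : C, X ≅ X
  nat : ∀ {X Y : C} (f : X ⟶ Y), f ≫ (R Y).hom = (R X).hom ≫ f
  unit : (R (𝟙_ C)).hom = 𝟙 (𝟙_ C)
  /-- `(R_{X⊗Y} ⊗ id_Z)(id_X ⊗ R_{Y⊗Z}) = (id_X ⊗ R_{Y⊗Z})(R_{X⊗Y} ⊗ id_Z)` -/
  comm : ∀ X Y Z : C,
    cE (by simp [hS.assocObj]) (𝟙 X ⊗ₘ (R (Y ⊗ Z)).hom) ≫ ((R (X ⊗ Y)).hom ⊗ₘ 𝟙 Z)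
    = ((R (X ⊗ Y)).hom ⊗ₘ 𝟙 Z) ≫ cE (by simp [hS.assocObj]) (𝟙 X ⊗ₘ (R (Y ⊗ Z)).hom)


section Transport

variable {K : Type*} [Category K] {X Y Z : K}

@[simp]
lemma cE_rfl (h : X = X) (f : X ⟶ X) : cE h f = f := by
  simp [cE]

lemma cE_comp (h : X = Y) (f g : Y ⟶ Y) : cE h (f ≫ g) = cE h f ≫ cE h g := by
  simp [cE]

lemma cE_cE (h : X = Y) (h' : Y = Z) (f : Z ⟶ Z) : cE h (cE h' f) = cE (h.trans h') f := by
  simp [cE]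

lemma cE_inj (h : X = Y) {f g : Y ⟶ Y} : cE h f = cE h g ↔ f = g := by
  subst h; simp

lemma cE_comp_cE_of_comp_eq_id {W : K} (h h' : X = Y) {f g : Y ⟶ Y} (w : f ≫ g = 𝟙 Y)
    (k : X ⟶ W) : cE h f ≫ cE h' g ≫ k = k := by
  subst h; simp [reassoc_of% w]

lemma cE_id (h : X = Y) : cE h (𝟙 Y) = 𝟙 X := by
  simp [cE]

lemma cE_hom_inv_id (h : X = Y) (f : Y ≅ Y) : cE h f.hom ≫ cE h f.inv = 𝟙 X := by
  rw [← cE_comp, f.hom_inv_id, cE_id]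

lemma cE_inv_hom_id (h : X = Y) (f : Y ≅ Y) : cE h f.inv ≫ cE h f.hom = 𝟙 X := by
  rw [← cE_comp, f.inv_hom_id, cE_id]

def cEIso (h : X = Y) (f : Y ≅ Y) : X ≅ X where
  hom := cE h f.hom
  inv := cE h f.inv
  hom_inv_id := cE_hom_inv_id h f
  inv_hom_id := cE_inv_hom_id h f

end Transport

section TransportTensor

variable {X Y : C}

lemma id_tensorHom_cE (W : C) (h : X = Y) (f : Y ⟶ Y) (h' : W ⊗ X = W ⊗ Y) :
    𝟙 W ⊗ₘ cE h f = cE h' (𝟙 W ⊗ₘ f) := by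
  subst h; simp

lemma cE_tensorHom_id (W : C) (h : X = Y) (f : Y ⟶ Y) (h' : X ⊗ W = Y ⊗ W) :
    cE h f ⊗ₘ 𝟙 W = cE h' (f ⊗ₘ 𝟙 W) := by
  subst h; simp

end TransportTensor

namespace MonStrict

variable {X Y Z X' Y' Z' : C}

lemma associator_inv_eq (hS : MonStrict C) (X Y Z : C) :
    (α_ X Y Z).inv = eqToHom (hS.assocObj X Y Z).symm :=
  Iso.inv_ext (by simp [hS.assocHom])

lemma tensorHom_assoc_comp_eqToHom (hS : MonStrict C) (f : X ⟶ X') (g : Y ⟶ Y') (h : Z ⟶ Z')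
    (e : (X ⊗ Y) ⊗ Z = X ⊗ (Y ⊗ Z)) (e' : (X' ⊗ Y') ⊗ Z' = X' ⊗ (Y' ⊗ Z')) :
    ((f ⊗ₘ g) ⊗ₘ h) ≫ eqToHom e' = eqToHom e ≫ (f ⊗ₘ (g ⊗ₘ h)) := by
  simpa [hS.assocHom] using associator_naturality f g h

lemma tensorHom_assoc_symm_comp_eqToHom (hS : MonStrict C) (f : X ⟶ X') (g : Y ⟶ Y')
    (h : Z ⟶ Z') (e : X ⊗ (Y ⊗ Z) = (X ⊗ Y) ⊗ Z) (e' : X' ⊗ (Y' ⊗ Z') = (X' ⊗ Y') ⊗ Z') :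
    (f ⊗ₘ (g ⊗ₘ h)) ≫ eqToHom e' = eqToHom e ≫ ((f ⊗ₘ g) ⊗ₘ h) := by
  simpa [hS.associator_inv_eq] using associator_inv_naturality f g h

lemma cE_tensorHom_assoc (hS : MonStrict C) (f : X ⟶ X) (g : Y ⟶ Y) (h : Z ⟶ Z)
    (e : (X ⊗ Y) ⊗ Z = X ⊗ (Y ⊗ Z)) : cE e (f ⊗ₘ (g ⊗ₘ h)) = (f ⊗ₘ g) ⊗ₘ h := by
  rw [cE, ← Category.assoc, ← hS.tensorHom_assoc_comp_eqToHom f g h e e]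
  simp

lemma id_unit_tensorHom (hS : MonStrict C) (f : X ⟶ X) (e : 𝟙_ C ⊗ X = X) :
    𝟙 (𝟙_ C) ⊗ₘ f = cE e f := by
  have := leftUnitor_naturality f
  rw [hS.lidHom] at this
  simp [cE, ← reassoc_of% this]

end MonStrict

section Commuting

variable {K : Type*} [Category K] {X : K}

lemma inv_comp_eq_comp_inv_of_comm {d m : X ⟶ X} {l r : X ≅ X} (h : d ≫ l.hom = m ≫ r.hom)
    (hdl : l.hom ≫ d = d ≫ l.hom) : l.inv ≫ m = d ≫ r.inv := by
  rw [Iso.inv_comp_eq, reassoc_of% hdl, reassoc_of% h, Iso.hom_inv_id, Category.comp_id]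

lemma comp_inv_eq_inv_comp_of_comm {d m : X ⟶ X} {l r : X ≅ X} (h : d ≫ l.hom = m ≫ r.hom)
    (hmr : r.hom ≫ m = m ≫ r.hom) : m ≫ l.inv = r.inv ≫ d := by
  rw [Iso.eq_inv_comp, reassoc_of% hmr, ← reassoc_of% h, Iso.hom_inv_id, Category.comp_id]

end Commuting

namespace Twine

variable {hS : MonStrict C} (T : Twine C hS)

lemma nat_inv {X Y X' Y' : C} (f : X ⟶ X') (g : Y ⟶ Y') :
    (f ⊗ₘ g) ≫ (T.D X' Y').inv = (T.D X Y).inv ≫ (f ⊗ₘ g) := by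
  rw [Iso.comp_inv_eq, Category.assoc, T.nat f g, Iso.inv_hom_id_assoc]

lemma D_hom_eq_cE {X X' Y Y' : C} (hX : X = X') (hY : Y = Y') (e : X ⊗ Y = X' ⊗ Y') :
    (T.D X Y).hom = cE e (T.D X' Y').hom := by
  subst hX hY; rw [cE_rfl]

lemma D_unit_left_hom (Z : C) : (T.D (𝟙_ C) Z).hom = 𝟙 (𝟙_ C ⊗ Z) := by
  have fus := T.fus (𝟙_ C) (𝟙_ C) Z
  rw [T.unit, id_tensorHom_id, Category.comp_id,
    T.D_hom_eq_cE (hS.lidObj (𝟙_ C)) rfl (by rw [hS.lidObj]),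
    T.D_hom_eq_cE (X := 𝟙_ C) rfl (hS.lidObj Z) (by rw [hS.lidObj]),
    hS.id_unit_tensorHom (T.D (𝟙_ C) Z).hom (hS.lidObj _), ← cE_comp, cE_cE, cE_inj] at fus
  exact (cancel_epi _).1 (fus.symm.trans (Category.comp_id _).symm)

lemma D_unit_left_inv (Z : C) : (T.D (𝟙_ C) Z).inv = 𝟙 (𝟙_ C ⊗ Z) :=
  Iso.inv_ext (by rw [T.D_unit_left_hom, Category.id_comp])

lemma fus_cE {X Y Z : C} (e : X ⊗ (Y ⊗ Z) = (X ⊗ Y) ⊗ Z) :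
    (T.D X (Y ⊗ Z)).hom ≫ (𝟙 X ⊗ₘ (T.D Y Z).hom)
      = cE e (T.D (X ⊗ Y) Z).hom ≫ cE e ((T.D X Y).hom ⊗ₘ 𝟙 Z) := by
  rw [← cE_comp, T.fus, cE_cE, cE_rfl]

lemma tensorHom_comp_id_tensorHom_D_inv {U V W U' V' W' : C} (f : U ⟶ U') (g : V ⟶ V')
    (h : W ⟶ W') : (f ⊗ₘ (g ⊗ₘ h)) ≫ (𝟙 U' ⊗ₘ (T.D V' W').inv)
      = (𝟙 U ⊗ₘ (T.D V W).inv) ≫ (f ⊗ₘ (g ⊗ₘ h)) := by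
  rw [tensorHom_comp_tensorHom, tensorHom_comp_tensorHom, T.nat_inv, Category.comp_id,
    Category.id_comp]

lemma tensorHom_comp_cE_D {U V W U' V' W' : C} (f : U ⟶ U') (g : V ⟶ V') (h : W ⟶ W')
    (e : U ⊗ (V ⊗ W) = (U ⊗ V) ⊗ W) (e' : U' ⊗ (V' ⊗ W') = (U' ⊗ V') ⊗ W') :
    (f ⊗ₘ (g ⊗ₘ h)) ≫ cE e' (T.D (U' ⊗ V') W').hom
      = cE e (T.D (U ⊗ V) W).hom ≫ (f ⊗ₘ (g ⊗ₘ h)) := by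
  simp only [cE, Category.assoc]
  rw [reassoc_of% (hS.tensorHom_assoc_symm_comp_eqToHom f g h e e'),
    reassoc_of% (T.nat (f ⊗ₘ g) h), hS.tensorHom_assoc_comp_eqToHom f g h]

def A (X Y Z : C) : X ⊗ (Y ⊗ Z) ≅ X ⊗ (Y ⊗ Z) :=
  tensorIso (Iso.refl X) (T.D Y Z).symm ≪≫ cEIso (by simp [hS.assocObj]) (T.D (X ⊗ Y) Z)

def B (X Y Z : C) : X ⊗ (Y ⊗ Z) ≅ X ⊗ (Y ⊗ Z) :=
  cEIso (by simp [hS.assocObj]) (T.D (X ⊗ Y) Z) ≪≫ tensorIso (Iso.refl X) (T.D Y Z).symm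

variable {X Y Z : C}

lemma A_hom : (T.A X Y Z).hom
    = (𝟙 X ⊗ₘ (T.D Y Z).inv) ≫ cE (by simp [hS.assocObj]) (T.D (X ⊗ Y) Z).hom := rfl

lemma B_hom : (T.B X Y Z).hom
    = cE (by simp [hS.assocObj]) (T.D (X ⊗ Y) Z).hom ≫ (𝟙 X ⊗ₘ (T.D Y Z).inv) := rfl

lemma A_hom_eq (e : X ⊗ (Y ⊗ Z) = (X ⊗ Y) ⊗ Z) :
    (T.A X Y Z).hom = (T.D X (Y ⊗ Z)).hom ≫ cE e ((T.D X Y).inv ⊗ₘ 𝟙 Z) :=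
  inv_comp_eq_comp_inv_of_comm (l := tensorIso (Iso.refl X) (T.D Y Z))
    (r := cEIso e (tensorIso (T.D X Y) (Iso.refl Z))) (T.fus_cE e) (T.nat (𝟙 X) (T.D Y Z).hom)

lemma B_hom_eq (e : X ⊗ (Y ⊗ Z) = (X ⊗ Y) ⊗ Z) :
    (T.B X Y Z).hom = cE e ((T.D X Y).inv ⊗ₘ 𝟙 Z) ≫ (T.D X (Y ⊗ Z)).hom :=
  comp_inv_eq_inv_comp_of_comm (l := tensorIso (Iso.refl X) (T.D Y Z))
    (r := cEIso e (tensorIso (T.D X Y) (Iso.refl Z))) (T.fus_cE e)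
    (by simp only [cEIso, ← cE_comp]; exact congrArg (cE e) (T.nat (T.D X Y).hom (𝟙 Z)))

lemma A_natural {U V W U' V' W' : C} (f : U ⟶ U') (g : V ⟶ V') (h : W ⟶ W') :
    (f ⊗ₘ (g ⊗ₘ h)) ≫ (T.A U' V' W').hom = (T.A U V W).hom ≫ (f ⊗ₘ (g ⊗ₘ h)) := by
  rw [A_hom, A_hom, reassoc_of% T.tensorHom_comp_id_tensorHom_D_inv, T.tensorHom_comp_cE_D,
    Category.assoc]

lemma B_natural {U V W U' V' W' : C} (f : U ⟶ U') (g : V ⟶ V') (h : W ⟶ W') :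
    (f ⊗ₘ (g ⊗ₘ h)) ≫ (T.B U' V' W').hom = (T.B U V W).hom ≫ (f ⊗ₘ (g ⊗ₘ h)) := by
  rw [B_hom, B_hom, reassoc_of% T.tensorHom_comp_cE_D, T.tensorHom_comp_id_tensorHom_D_inv,
    Category.assoc]

lemma A_tensor_left (U V W X : C) (e1 : (U ⊗ V) ⊗ (W ⊗ X) = U ⊗ (V ⊗ (W ⊗ X)))
    (e2 : U ⊗ (V ⊗ (W ⊗ X)) = U ⊗ ((V ⊗ W) ⊗ X)) :
    (T.A (U ⊗ V) W X).hom =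
      cE e1 ((𝟙 U ⊗ₘ (T.A V W X).hom) ≫ cE e2 (T.A U (V ⊗ W) X).hom) := by
  simp only [A_hom, id_tensor_comp, id_tensorHom_cE U _ _ e2, cE_comp, cE_cE, Category.assoc]
  rw [cE_comp_cE_of_comp_eq_id _ _ (by simp), hS.cE_tensorHom_assoc, id_tensorHom_id,
    T.D_hom_eq_cE (hS.assocObj U V W) rfl (by simp [hS.assocObj]), cE_cE]

lemma B_tensor_left (U V W X : C) (e1 : (U ⊗ V) ⊗ (W ⊗ X) = U ⊗ (V ⊗ (W ⊗ X)))
    (e2 : U ⊗ (V ⊗ (W ⊗ X)) = U ⊗ ((V ⊗ W) ⊗ X)) :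
    (T.B (U ⊗ V) W X).hom =
      cE e1 (cE e2 (T.B U (V ⊗ W) X).hom ≫ (𝟙 U ⊗ₘ (T.B V W X).hom)) := by
  simp only [B_hom, id_tensor_comp, id_tensorHom_cE U _ _ e2, cE_comp, cE_cE, Category.assoc]
  rw [cE_comp_cE_of_comp_eq_id _ _ (by simp), hS.cE_tensorHom_assoc, id_tensorHom_id,
    T.D_hom_eq_cE (hS.assocObj U V W) rfl (by simp [hS.assocObj]), cE_cE]

lemma A_tensor_right (U V W X : C) (e1 : U ⊗ (V ⊗ (W ⊗ X)) = (U ⊗ (V ⊗ W)) ⊗ X)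
    (e2 : (U ⊗ (V ⊗ W)) ⊗ X = U ⊗ ((V ⊗ W) ⊗ X)) :
    (T.A U V (W ⊗ X)).hom =
      cE e1 (cE e2 (T.A U (V ⊗ W) X).hom ≫ ((T.A U V W).hom ⊗ₘ 𝟙 X)) := by
  have e3 : (U ⊗ (V ⊗ W)) ⊗ X = ((U ⊗ V) ⊗ W) ⊗ X := by simp [hS.assocObj]
  simp only [T.A_hom_eq (by simp [hS.assocObj]), comp_tensor_id, cE_tensorHom_id _ _ _ e3,
    cE_comp, cE_cE, Category.assoc]
  rw [cE_comp_cE_of_comp_eq_id _ _ (by simp),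
    ← hS.cE_tensorHom_assoc (T.D U V).inv (𝟙 W) (𝟙 X) (hS.assocObj _ _ _), id_tensorHom_id,
    T.D_hom_eq_cE rfl (hS.assocObj V W X).symm (by simp [hS.assocObj]), cE_cE]

lemma B_tensor_right (U V W X : C) (e1 : U ⊗ (V ⊗ (W ⊗ X)) = (U ⊗ (V ⊗ W)) ⊗ X)
    (e2 : (U ⊗ (V ⊗ W)) ⊗ X = U ⊗ ((V ⊗ W) ⊗ X)) :
    (T.B U V (W ⊗ X)).hom =
      cE e1 (((T.B U V W).hom ⊗ₘ 𝟙 X) ≫ cE e2 (T.B U (V ⊗ W) X).hom) := by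
  have e3 : (U ⊗ (V ⊗ W)) ⊗ X = ((U ⊗ V) ⊗ W) ⊗ X := by simp [hS.assocObj]
  simp only [T.B_hom_eq (by simp [hS.assocObj]), comp_tensor_id, cE_tensorHom_id _ _ _ e3,
    cE_comp, cE_cE, Category.assoc]
  rw [cE_comp_cE_of_comp_eq_id _ _ (by simp),
    ← hS.cE_tensorHom_assoc (T.D U V).inv (𝟙 W) (𝟙 X) (hS.assocObj _ _ _), id_tensorHom_id,
    T.D_hom_eq_cE rfl (hS.assocObj V W X).symm (by simp [hS.assocObj]), cE_cE]

lemma A_hom_tensorHom_id (U V W X : C) (e : (U ⊗ (V ⊗ W)) ⊗ X = ((U ⊗ V) ⊗ W) ⊗ X) :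
    (T.A U V W).hom ⊗ₘ 𝟙 X
      = ((𝟙 U ⊗ₘ (T.D V W).inv) ⊗ₘ 𝟙 X) ≫ cE e ((T.D (U ⊗ V) W).hom ⊗ₘ 𝟙 X) := by
  rw [A_hom, comp_tensor_id, cE_tensorHom_id _ _ _ e]

lemma cE_id_tensorHom_B_hom (U V W X : C) (e : (U ⊗ (V ⊗ W)) ⊗ X = U ⊗ (V ⊗ (W ⊗ X))) :
    cE e (𝟙 U ⊗ₘ (T.B V W X).hom)
      = ((𝟙 U ⊗ₘ (T.D V W).inv) ⊗ₘ 𝟙 X) ≫ cE e (𝟙 U ⊗ₘ (T.D V (W ⊗ X)).hom) := by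
  rw [T.B_hom_eq (by simp [hS.assocObj]), id_tensor_comp,
    id_tensorHom_cE U _ _ (by simp [hS.assocObj]), cE_comp, cE_cE, hS.cE_tensorHom_assoc]

lemma ent_cE (U V W X : C) (e : (U ⊗ (V ⊗ W)) ⊗ X = U ⊗ (V ⊗ (W ⊗ X)))
    (e' : (U ⊗ (V ⊗ W)) ⊗ X = ((U ⊗ V) ⊗ W) ⊗ X) :
    cE e (𝟙 U ⊗ₘ (T.D V (W ⊗ X)).hom) ≫ ((𝟙 U ⊗ₘ (T.D V W).inv) ⊗ₘ 𝟙 X) ≫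
        cE e' ((T.D (U ⊗ V) W).hom ⊗ₘ 𝟙 X)
      = cE e' ((T.D (U ⊗ V) W).hom ⊗ₘ 𝟙 X) ≫ ((𝟙 U ⊗ₘ (T.D V W).inv) ⊗ₘ 𝟙 X) ≫
        cE e (𝟙 U ⊗ₘ (T.D V (W ⊗ X)).hom) := by
  have ent := congrArg (cE e') (T.ent U V W X)
  simp only [cE_comp, cE_cE] at ent
  rwa [hS.cE_tensorHom_assoc] at ent

lemma id_tensorHom_B_comm_A_tensorHom_id (U V W X : C) (e : (U ⊗ (V ⊗ W)) ⊗ X = U ⊗ (V ⊗ (W ⊗ X))) :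
    cE e (𝟙 U ⊗ₘ (T.B V W X).hom) ≫ ((T.A U V W).hom ⊗ₘ 𝟙 X)
      = ((T.A U V W).hom ⊗ₘ 𝟙 X) ≫ cE e (𝟙 U ⊗ₘ (T.B V W X).hom) := by
  have e' : (U ⊗ (V ⊗ W)) ⊗ X = ((U ⊗ V) ⊗ W) ⊗ X := by simp [hS.assocObj]
  simp only [T.cE_id_tensorHom_B_hom, T.A_hom_tensorHom_id U V W X e', Category.assoc]
  rw [T.ent_cE U V W X e e']

lemma A_unit_eq_B_unit (U V : C) : T.A U (𝟙_ C) V = T.B U (𝟙_ C) V := by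
  ext
  rw [A_hom, B_hom, T.D_unit_left_inv, id_tensorHom_id, Category.id_comp, Category.comp_id]

def pureBraided : PureBraided C hS where
  A := T.A
  B := T.B
  natA := T.A_natural
  natB := T.B_natural
  a1 U V W X := T.A_tensor_left U V W X _ _
  a2 U V W X := T.A_tensor_right U V W X _ _
  baba U V W X := T.B_tensor_left U V W X _ _
  b2 U V W X := T.B_tensor_right U V W X _ _
  cab U V W X := T.id_tensorHom_B_comm_A_tensorHom_id U V W X _
  t1t := T.A_unit_eq_B_unit

end Twine

/-- From a twine `D` on a strict monoidal category, the families
`A_{X,Y,Z} = D_{X⊗Y,Z}(id_X ⊗ D_{Y,Z}⁻¹)` and `B_{X,Y,Z} = (id_X ⊗ D_{Y,Z}⁻¹)D_{X⊗Y,Z}`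
form a pure-braided structure. -/
theorem stmt12 (hS : MonStrict C) (T : Twine C hS) :
    ∃ P : PureBraided C hS,
      (∀ X Y Z : C, (P.A X Y Z).hom =
        (𝟙 X ⊗ₘ (T.D Y Z).inv) ≫ cE (by simp [hS.assocObj]) (T.D (X ⊗ Y) Z).hom) ∧
      (∀ X Y Z : C, (P.B X Y Z).hom =
        cE (by simp [hS.assocObj]) (T.D (X ⊗ Y) Z).hom ≫ (𝟙 X ⊗ₘ (T.D Y Z).inv)) :=
  ⟨T.pureBraided, fun _ _ _ => rfl, fun _ _ _ => rfl⟩
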